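/- arXiv:2410.16279 — 4 statements merged into one kernel-verified Lean document; each statement's English description precedes it below -/
import Mathlib

section
/- Let R be a commutative ring with unity, G = ⟨x | x^n = 1⟩ a cyclic group of order n ≥ 1, σ, τ R-algebra endomorphisms of RG, and D : RG → RG a (σ,τ)-derivation. Then D is inner if and only if there exists some β ∈ RG such that D(x) = β(τ(x) − σ(x)). -/
/-!
The set of elements on which `D` agrees with the inner `(σ,τ)`-derivation `a ↦ β (τ a - σ a)` is
an `R`-subalgebra, by the twisted Leibniz rule and commutativity. Since the group ring of a finite
cyclic group is generated as an `R`-algebra by the generator `x`, agreement at `x` forces agreement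
everywhere.
-/

/-- The generator `x` of the cyclic group of order `n`, viewed inside the group ring
`R[Multiplicative (ZMod n)]`. -/
noncomputable def xgen (R : Type*) [CommRing R] (n : ℕ) :
    MonoidAlgebra R (Multiplicative (ZMod n)) :=
  MonoidAlgebra.of R (Multiplicative (ZMod n)) (Multiplicative.ofAdd (1 : ZMod n))

section TwistedDerivation

variable {R A : Type*} [CommSemiring R] [CommRing A] [Algebra R A]
  {σ τ : A →ₐ[R] A} {D : A →ₗ[R] A}

lemma map_one_eq_zero_of_leibniz (hD : ∀ a b, D (a * b) = D a * τ b + σ a * D b) : D 1 = 0 := by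
  simpa using hD 1 1

lemma eq_mul_sub_of_adjoin_eq_top (hD : ∀ a b, D (a * b) = D a * τ b + σ a * D b) (β : A)
    {s : Set A} (hs : Algebra.adjoin R s = ⊤) (h : ∀ a ∈ s, D a = β * (τ a - σ a)) (a : A) :
    D a = β * (τ a - σ a) := by
  have ha : a ∈ Algebra.adjoin R s := hs ▸ Algebra.mem_top
  induction ha using Algebra.adjoin_induction with
  | mem x hx => exact h x hx
  | algebraMap r =>
    rw [Algebra.algebraMap_eq_smul_one, map_smul, map_smul, map_smul,
      map_one_eq_zero_of_leibniz hD, map_one, map_one, sub_self, smul_zero, mul_zero]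
  | add x y _ _ hx hy => rw [map_add, map_add, map_add, hx, hy]; ring
  | mul x y _ _ hx hy => rw [hD, map_mul, map_mul, hx, hy]; ring

end TwistedDerivation

lemma xgen_pow_val (R : Type*) [CommRing R] {n : ℕ} [NeZero n] (g : Multiplicative (ZMod n)) :
    xgen R n ^ (Multiplicative.toAdd g).val = MonoidAlgebra.of R (Multiplicative (ZMod n)) g := by
  rw [xgen, ← map_pow, ← ofAdd_nsmul, nsmul_one, ZMod.natCast_zmod_val, ofAdd_toAdd]

lemma adjoin_xgen_eq_top (R : Type*) [CommRing R] (n : ℕ) [NeZero n] :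
    Algebra.adjoin R {xgen R n} = ⊤ := by
  refine eq_top_iff.mpr fun f _ ↦ ?_
  induction f using MonoidAlgebra.induction_on with
  | of g =>
    rw [← xgen_pow_val R g]
    exact pow_mem (Algebra.self_mem_adjoin_singleton R _) _
  | add f g hf hg => exact add_mem (hf trivial) (hg trivial)
  | smul r f hf => exact Subalgebra.smul_mem _ (hf trivial) r

/-- A `(σ,τ)`-derivation `D` of the group ring of the cyclic group
`⟨x | x^n = 1⟩` is inner iff there exists `β` with `D x = β (τ x − σ x)`. -/
theorem stmt4 {R : Type*} [CommRing R] (n : ℕ) [NeZero n]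
    (σ τ : MonoidAlgebra R (Multiplicative (ZMod n)) →ₐ[R] MonoidAlgebra R (Multiplicative (ZMod n)))
    (D : MonoidAlgebra R (Multiplicative (ZMod n)) →ₗ[R] MonoidAlgebra R (Multiplicative (ZMod n)))
    (hD : ∀ a b, D (a * b) = D a * τ b + σ a * D b) :
    (∃ β, ∀ a, D a = β * (τ a - σ a)) ↔
    (∃ β, D (xgen R n) = β * (τ (xgen R n) - σ (xgen R n))) := by
  refine ⟨fun ⟨β, h⟩ ↦ ⟨β, h _⟩, fun ⟨β, hβ⟩ ↦ ⟨β, ?_⟩⟩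
  exact eq_mul_sub_of_adjoin_eq_top hD β (adjoin_xgen_eq_top R n) (by simpa using hβ)
end

section
/- Let R be a nontrivial commutative ring with unity, n ≥ 1, u, v ∈ {0, 1, …, n−1} with v ≠ 0, and d = gcd(v,n). Let A be the n×n matrix over R whose (i,j) entry is 1 if j ≡ i−u (mod n), −1 if j ≡ i−u−v (mod n), and 0 otherwise. Then the first n−d rows R_0, R_1, …, R_{n−d−1} of A are linearly independent over R: if α_0, α_1, …, α_{n−d−1} ∈ R satisfy Σ_{i=0}^{n−d−1} α_i R_i = 0 (the zero row vector), then α_i = 0 for all i ∈ {0, 1, …, n−d−1}. -/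
/-- The `n × n` matrix `A` over `R` (rows and columns indexed mod `n`) whose `(i,j)`
entry is `1` if `j ≡ i − u (mod n)`, `−1` if `j ≡ i − u − v (mod n)`, and `0` otherwise. -/
def matA (R : Type*) [CommRing R] (n u v : ℕ) : Matrix (ZMod n) (ZMod n) R :=
  fun i j =>
    if j = i - (u : ZMod n) then 1
    else if j = i - (u : ZMod n) - (v : ZMod n) then -1
    else 0

/-- With `d = gcd(v,n)`, the first `n − d` rows `R_0, …, R_{n−d−1}` of `A`
are linearly independent over `R`. -/
theorem stmt7 {R : Type*} [CommRing R] [Nontrivial R] (n u v : ℕ) [NeZero n]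
    (hu : u < n) (hv : v < n) (hv0 : v ≠ 0) :
    ∀ α : ℕ → R,
      (∀ k : ZMod n,
        ∑ i ∈ Finset.range (n - Nat.gcd v n), α i * matA R n u v ((i : ℕ) : ZMod n) k = 0) →
      ∀ i : ℕ, i < n - Nat.gcd v n → α i = 0 := by
  intro α hα i hi
  set d := Nat.gcd v n with hd
  have hn : 0 < n := Nat.pos_of_ne_zero (NeZero.ne n)
  have hd0 : 0 < d := Nat.gcd_pos_of_pos_right v hn
  have hdn : d ∣ n := Nat.gcd_dvd_right v n
  have hdv : d ∣ v := Nat.gcd_dvd_left v n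
  have hdltn : d < n := lt_of_le_of_lt (Nat.le_of_dvd (Nat.pos_of_ne_zero hv0) hdv) hv
  set β : ZMod n → R := fun x => if x.val < n - d then α x.val else 0 with hβ
  have hcast : ∀ (m : ℕ), m < n → ∀ x : ZMod n, (((m : ℕ) : ZMod n) = x ↔ m = x.val) := by
    intro m hm x
    constructor
    · intro h
      rw [← h, ZMod.val_natCast, Nat.mod_eq_of_lt hm]
    · intro h
      rw [h, ZMod.natCast_val, ZMod.cast_id]
  have hvz : (v : ZMod n) ≠ 0 := by
    rw [Ne, ZMod.natCast_eq_zero_iff]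
    intro h
    exact absurd (Nat.le_of_dvd (Nat.pos_of_ne_zero hv0) h) (not_le.mpr hv)
  have sumβ : ∀ x : ZMod n,
      (∑ j ∈ Finset.range (n - d), if ((j : ℕ) : ZMod n) = x then α j else 0) = β x := by
    intro x
    by_cases hx : x.val < n - d
    · rw [Finset.sum_eq_single x.val]
      · rw [if_pos ((hcast x.val (lt_of_lt_of_le hx (Nat.sub_le n d)) x).mpr rfl)]
        simp [hβ, hx]
      · intro b hb hbx
        rw [if_neg]
        intro hc
        exact hbx ((hcast b (lt_of_lt_of_le (Finset.mem_range.mp hb) (Nat.sub_le n d)) x).mp hc)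
      · intro hxx; exact absurd (Finset.mem_range.mpr hx) hxx
    · rw [Finset.sum_eq_zero, hβ]
      · simp [hx]
      · intro b hb
        rw [if_neg]
        intro hc
        have := (hcast b (lt_of_lt_of_le (Finset.mem_range.mp hb) (Nat.sub_le n d)) x).mp hc
        exact hx (this ▸ Finset.mem_range.mp hb)
  have step1 : ∀ j : ZMod n, β j = β (j + v) := by
    intro j
    have hne : j ≠ j + v := by
      intro hj
      apply hvz
      linear_combination -hj
    have h := hα (j - u)
    have e1 : ∀ b ∈ Finset.range (n - d),
        α b * matA R n u v ((b : ℕ) : ZMod n) (j - u)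
          = (if ((b : ℕ) : ZMod n) = j then α b else 0)
            - (if ((b : ℕ) : ZMod n) = j + v then α b else 0) := by
      intro b _
      have c1 : ((j - u : ZMod n) = ((b : ℕ) : ZMod n) - u) ↔ (((b : ℕ) : ZMod n) = j) :=
        ⟨fun h => by linear_combination -h, fun h => by linear_combination -h⟩
      have c2 : ((j - u : ZMod n) = ((b : ℕ) : ZMod n) - u - v) ↔ (((b : ℕ) : ZMod n) = j + v) :=
        ⟨fun h => by linear_combination -h, fun h => by linear_combination -h⟩
      simp only [matA, c1, c2]
      split_ifs with h1 h2
      · exact absurd (h1.symm.trans h2) hne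
      · ring
      · ring
      · ring
    rw [Finset.sum_congr rfl e1, Finset.sum_sub_distrib, sumβ, sumβ, sub_eq_zero] at h
    exact h
  have step2 : ∀ t : ℕ, ∀ j : ZMod n, β j = β (j + (t : ZMod n) * (v : ZMod n)) := by
    intro t
    induction t with
    | zero => intro j; simp
    | succ t ih =>
      intro j
      have : j + ((t + 1 : ℕ) : ZMod n) * (v : ZMod n)
          = (j + (t : ZMod n) * (v : ZMod n)) + v := by push_cast; ring
      rw [this, ← step1]
      exact ih j
  have lemA : ∀ c : ℕ, d ∣ c → ∃ t : ℕ, ((t : ZMod n) * (v : ZMod n) = (c : ZMod n)) := by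
    intro c hc
    have hbez := Nat.gcd_eq_gcd_ab v n
    have h1 : ((v : ℤ) * Nat.gcdA v n + (n : ℤ) * Nat.gcdB v n : ℤ) = ((d : ℕ) : ℤ) := by
      rw [hd]; exact hbez.symm
    have h2 : ((Nat.gcdA v n : ℤ) : ZMod n) * (v : ZMod n) = (d : ZMod n) := by
      have := congrArg (fun z : ℤ => (z : ZMod n)) h1
      push_cast at this
      simp only [ZMod.natCast_self, zero_mul, add_zero] at this
      linear_combination this
    refine ⟨(((c / d : ℕ) : ZMod n) * ((Nat.gcdA v n : ℤ) : ZMod n)).val, ?_⟩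
    rw [ZMod.natCast_val, ZMod.cast_id, mul_assoc, h2]
    rw [← Nat.cast_mul, Nat.div_mul_cancel hc]
  -- now conclude
  have hiv : ((i : ℕ) : ZMod n).val = i := by
    rw [ZMod.val_natCast, Nat.mod_eq_of_lt (lt_of_lt_of_le hi (Nat.sub_le n d))]
  set r := n - d + i % d with hr
  have himod : i % d < d := Nat.mod_lt i hd0
  have hr2 : r < n := by omega
  have hir : i ≤ r := by omega
  have hdiv : d ∣ (r - i) := by
    have hle : i % d ≤ i := Nat.mod_le i d
    have h1 : (n - d + i % d) - i = (n - d) - (i - i % d) := by omega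
    rw [hr, h1]
    exact Nat.dvd_sub (Nat.dvd_sub hdn dvd_rfl) (Nat.dvd_sub_mod i)
  obtain ⟨t, ht⟩ := lemA (r - i) hdiv
  have key : ((i : ℕ) : ZMod n) + (t : ZMod n) * (v : ZMod n) = ((r : ℕ) : ZMod n) := by
    rw [ht, ← Nat.cast_add, Nat.add_sub_cancel' hir]
  have hβi : β ((i : ℕ) : ZMod n) = α i := by
    rw [hβ]; simp only [hiv]; rw [if_pos hi]
  have hβr : β ((r : ℕ) : ZMod n) = 0 := by
    rw [hβ]
    simp only [ZMod.val_natCast, Nat.mod_eq_of_lt hr2]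
    rw [if_neg (by omega)]
  have := step2 t ((i : ℕ) : ZMod n)
  rw [key, hβr, hβi] at this
  exact this
end

section
/- Let R be a commutative ring with unity, G = ⟨x | x^n = 1⟩ a cyclic group of order n, and σ, τ the R-algebra endomorphisms of RG with σ(x) = x^u and τ(x) = x^{u+v}, where u, v ∈ {0, 1, …, n−1}. Let D : RG → RG be an R-linear map with D(1) = 0 satisfying D(x^k) = (Σ_{i+j=k−1, i,j ≥ 0} σ(x)^i τ(x)^j)·D(x) for every k ∈ {1, 2, …, n−1}. Then D is a (σ,τ)-derivation of RG if and only if (Σ_{i=0}^{n−1} x^{iv})·D(x) = 0 in RG. -/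
open Finset

section GeomSum₂

variable {A : Type*} [CommSemiring A]

/-- `∑_{i+j=k-1} sⁱ tʲ`, which is `0` for `k = 0`. -/
def geomSum₂ (s t : A) (k : ℕ) : A := ∑ i ∈ range k, s ^ i * t ^ (k - 1 - i)

@[simp]
lemma geomSum₂_zero (s t : A) : geomSum₂ s t 0 = 0 := by simp [geomSum₂]

lemma geomSum₂_add (s t : A) (a b : ℕ) :
    geomSum₂ s t (a + b) = geomSum₂ s t a * t ^ b + s ^ a * geomSum₂ s t b := by
  simp only [geomSum₂, sum_range_add, sum_mul, mul_sum]
  congr 1 <;> refine sum_congr rfl fun i hi => ?_ <;> rw [mem_range] at hi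
  · rw [mul_assoc, ← pow_add]; congr 2; omega
  · rw [pow_add, mul_assoc]; congr 3; omega

lemma geomSum₂_succ (s t : A) (k : ℕ) : geomSum₂ s t (k + 1) = geomSum₂ s t k * t + s ^ k := by
  rw [geomSum₂_add, pow_one]
  simp [geomSum₂]

lemma geomSum₂_mul_right (s w : A) (k : ℕ) :
    geomSum₂ s (s * w) k = s ^ (k - 1) * ∑ i ∈ range k, w ^ i := by
  rw [geomSum₂, mul_sum, ← sum_range_reflect]
  refine sum_congr rfl fun i hi => ?_
  rw [mem_range] at hi
  rw [mul_pow, ← mul_assoc, ← pow_add]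
  congr 2 <;> omega

lemma sum_antidiagonal_pow_mul_pow (s t : A) (k : ℕ) :
    ∑ p ∈ antidiagonal k, s ^ p.1 * t ^ p.2 = geomSum₂ s t (k + 1) := by
  rw [Nat.sum_antidiagonal_eq_sum_range_succ (fun i j => s ^ i * t ^ j), geomSum₂,
    Nat.add_sub_cancel]

lemma geomSum₂_mul_periodic {s t d : A} {n : ℕ} (ht : t ^ n = 1) (hd : geomSum₂ s t n * d = 0) :
    Function.Periodic (fun k => geomSum₂ s t k * d) n := fun k => by
  simp only [geomSum₂_add, ht, mul_one, add_mul, mul_assoc, hd, mul_zero, add_zero]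

end GeomSum₂

section TwistedLeibniz

variable {A F : Type*} [CommRing A] [FunLike F A A] [MonoidHomClass F A A] (σ τ : F) (D : A → A)

lemma map_pow_of_twisted_leibniz (hD : ∀ a b, D (a * b) = D a * τ b + σ a * D b) (a : A) (k : ℕ) :
    D (a ^ k) = geomSum₂ (σ a) (τ a) k * D a := by
  induction k with
  | zero =>
    have h := hD 1 1
    rw [mul_one, map_one, map_one, mul_one, one_mul, left_eq_add] at h
    rw [pow_zero, h, geomSum₂_zero, zero_mul]
  | succ k ih =>
    rw [pow_succ, hD, ih, map_pow, geomSum₂_succ]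
    ring

lemma map_pow_of_forall_lt_of_pow_eq_one {x : A} {n : ℕ} [NeZero n] (hx : x ^ n = 1)
    (hn : geomSum₂ (σ x) (τ x) n * D x = 0)
    (hlt : ∀ k < n, D (x ^ k) = geomSum₂ (σ x) (τ x) k * D x) (k : ℕ) :
    D (x ^ k) = geomSum₂ (σ x) (τ x) k * D x := by
  have hpow : Function.Periodic (x ^ ·) n := fun k => by simp [pow_add, hx]
  have hτ : τ x ^ n = 1 := by rw [← map_pow, hx, map_one]
  rw [← hpow.map_mod_nat, ← (geomSum₂_mul_periodic hτ hn).map_mod_nat]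
  exact hlt _ (Nat.mod_lt _ (NeZero.pos n))

lemma twisted_leibniz_pow_of_map_pow {x : A}
    (hD : ∀ k, D (x ^ k) = geomSum₂ (σ x) (τ x) k * D x) (i j : ℕ) :
    D (x ^ i * x ^ j) = D (x ^ i) * τ (x ^ j) + σ (x ^ i) * D (x ^ j) := by
  rw [← pow_add, hD, hD, hD, map_pow, map_pow, geomSum₂_add]
  ring

end TwistedLeibniz

namespace MonoidAlgebra

variable {R G : Type*} [CommSemiring R] [Monoid G]

lemma twisted_leibniz_of_of (σ τ : MonoidAlgebra R G →ₐ[R] MonoidAlgebra R G)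
    (D : MonoidAlgebra R G →ₗ[R] MonoidAlgebra R G)
    (h : ∀ g g', D (of R G g * of R G g') =
      D (of R G g) * τ (of R G g') + σ (of R G g) * D (of R G g'))
    (a b : MonoidAlgebra R G) : D (a * b) = D a * τ b + σ a * D b := by
  have : (LinearMap.mul R _).compr₂ D =
      (LinearMap.mul R _).compl₁₂ D τ.toLinearMap +
        (LinearMap.mul R _).compl₁₂ σ.toLinearMap D := by
    ext g g' : 4
    simpa using h g g'
  exact congr($this a b)

end MonoidAlgebra

section CyclicGroupRing

variable (R : Type*) [CommRing R] (n : ℕ)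

lemma xgen_pow (k : ℕ) :
    xgen R n ^ k = MonoidAlgebra.of R _ (Multiplicative.ofAdd (k : ZMod n)) := by
  rw [xgen, ← map_pow, ← ofAdd_nsmul, nsmul_one]

lemma xgen_pow_self : xgen R n ^ n = 1 := by
  rw [xgen_pow, ZMod.natCast_self, ofAdd_zero, map_one]

lemma of_eq_xgen_pow [NeZero n] (g : Multiplicative (ZMod n)) :
    MonoidAlgebra.of R _ g = xgen R n ^ (Multiplicative.toAdd g).val := by
  rw [xgen_pow, ZMod.natCast_zmod_val, ofAdd_toAdd]

lemma isUnit_xgen [NeZero n] : IsUnit (xgen R n) :=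
  IsUnit.of_pow_eq_one (xgen_pow_self R n) (NeZero.ne n)

end CyclicGroupRing

theorem stmt10_general {R : Type*} [CommRing R] (n u v : ℕ) [NeZero n]
    (σ τ : MonoidAlgebra R (Multiplicative (ZMod n)) →ₐ[R] MonoidAlgebra R (Multiplicative (ZMod n)))
    (hσ : σ (xgen R n) = xgen R n ^ u) (hτ : τ (xgen R n) = xgen R n ^ (u + v))
    (D : MonoidAlgebra R (Multiplicative (ZMod n)) →ₗ[R] MonoidAlgebra R (Multiplicative (ZMod n)))
    (hD1 : D 1 = 0)
    (hrel : ∀ k : ℕ, 1 ≤ k → k ≤ n - 1 →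
      D (xgen R n ^ k) =
        (∑ p ∈ Finset.HasAntidiagonal.antidiagonal (k - 1), σ (xgen R n) ^ p.1 * τ (xgen R n) ^ p.2) *
          D (xgen R n)) :
    (∀ a b, D (a * b) = D a * τ b + σ a * D b) ↔
    (∑ i ∈ Finset.range n, xgen R n ^ (i * v)) * D (xgen R n) = 0 := by
  set x := xgen R n
  have hS : (∑ i ∈ range n, x ^ (i * v)) * D x = 0 ↔ geomSum₂ (σ x) (τ x) n * D x = 0 := by
    rw [hσ, hτ, pow_add, geomSum₂_mul_right, mul_assoc,
      (((isUnit_xgen R n).pow u).pow _).mul_right_eq_zero]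
    simp_rw [pow_mul']
  rw [hS]
  constructor
  · intro hder
    rw [← map_pow_of_twisted_leibniz σ τ D hder, xgen_pow_self, hD1]
  · intro hd
    have hlt : ∀ k < n, D (x ^ k) = geomSum₂ (σ x) (τ x) k * D x := by
      rintro (_ | k) hk
      · rw [pow_zero, hD1, geomSum₂_zero, zero_mul]
      · rw [hrel (k + 1) (by omega) (by omega), Nat.add_sub_cancel, sum_antidiagonal_pow_mul_pow]
    have hpow := map_pow_of_forall_lt_of_pow_eq_one σ τ D (xgen_pow_self R n) hd hlt
    refine MonoidAlgebra.twisted_leibniz_of_of σ τ D fun g g' => ?_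
    rw [of_eq_xgen_pow, of_eq_xgen_pow]
    exact twisted_leibniz_pow_of_map_pow σ τ D hpow _ _

/-- Let `σ, τ` be the `R`-algebra endomorphisms of the group ring of
`⟨x | x^n = 1⟩` with `σ x = x^u`, `τ x = x^{u+v}` (`u, v < n`). An `R`-linear map `D`
with `D 1 = 0` satisfying `D (x^k) = (Σ_{i+j=k−1} σ(x)^i τ(x)^j) D x` for
`k ∈ {1,…,n−1}` is a `(σ,τ)`-derivation iff `(Σ_{i=0}^{n−1} x^{iv}) D x = 0`. -/
theorem stmt10 {R : Type*} [CommRing R] (n u v : ℕ) [NeZero n]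
    (hu : u < n) (hv : v < n)
    (σ τ : MonoidAlgebra R (Multiplicative (ZMod n)) →ₐ[R] MonoidAlgebra R (Multiplicative (ZMod n)))
    (hσ : σ (xgen R n) = xgen R n ^ u) (hτ : τ (xgen R n) = xgen R n ^ (u + v))
    (D : MonoidAlgebra R (Multiplicative (ZMod n)) →ₗ[R] MonoidAlgebra R (Multiplicative (ZMod n)))
    (hD1 : D 1 = 0)
    (hrel : ∀ k : ℕ, 1 ≤ k → k ≤ n - 1 →
      D (xgen R n ^ k) =
        (∑ p ∈ Finset.HasAntidiagonal.antidiagonal (k - 1), σ (xgen R n) ^ p.1 * τ (xgen R n) ^ p.2) *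
          D (xgen R n)) :
    (∀ a b, D (a * b) = D a * τ b + σ a * D b) ↔
    (∑ i ∈ Finset.range n, xgen R n ^ (i * v)) * D (xgen R n) = 0 :=
  stmt10_general n u v σ τ hσ hτ D hD1 hrel
end

section
/- Let R be a commutative ring with unity in which n is invertible, let G = ⟨x | x^n = 1⟩ be a cyclic group of order n, and let σ be an R-algebra endomorphism of RG that is the R-linear extension of a group endomorphism of G (so σ(x) = x^u for some u ∈ {0, 1, …, n−1}). Then RG is (σ,σ)-differentially trivial: the only (σ,σ)-derivation of RG is the zero map. -/
/-!
Leibniz's rule gives `D (a ^ m) = m • σ a ^ (m - 1) * D a`. In the group ring every group element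
`g` satisfies `g ^ n = 1`, and `D 1 = 0`; since `n` and `σ g` are units, `D g = 0`. The group
elements span `RG`, so `D = 0`.
-/

/-- A `(σ,σ)`-derivation of a commutative ring, with `σ` only required to be multiplicative. -/
def IsTwistedDerivation {A : Type*} [CommRing A] (σ : A →* A) (D : A → A) : Prop :=
  ∀ a b, D (a * b) = D a * σ b + σ a * D b

namespace IsTwistedDerivation

variable {A : Type*} [CommRing A] {σ : A →* A} {D : A → A}

theorem apply_one (hD : IsTwistedDerivation σ D) : D 1 = 0 := by
  have h := hD 1 1
  simp only [mul_one, map_one, one_mul] at h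
  exact add_eq_left.mp h.symm

theorem apply_pow_succ (hD : IsTwistedDerivation σ D) (a : A) (k : ℕ) :
    D (a ^ (k + 1)) = (k + 1) * σ a ^ k * D a := by
  induction k with
  | zero => simp
  | succ k ih =>
    rw [pow_succ, hD, ih, map_pow]
    push_cast
    ring

theorem apply_eq_zero_of_pow_eq_one (hD : IsTwistedDerivation σ D) {m : ℕ}
    (hm : IsUnit (m : A)) {a : A} (ha : a ^ m = 1) : D a = 0 := by
  obtain _ | k := m
  · have : Subsingleton A := subsingleton_of_zero_eq_one (by simpa using hm)
    exact Subsingleton.elim _ _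
  have hσa : IsUnit (σ a) := (IsUnit.of_pow_eq_one ha k.succ_ne_zero).map σ
  have h : (k + 1) * σ a ^ k * D a = 0 := by
    rw [← hD.apply_pow_succ, ha, hD.apply_one]
  push_cast at hm
  exact ((hm.mul (hσa.pow k)).mul_right_eq_zero).mp h

end IsTwistedDerivation

theorem MonoidAlgebra.eq_zero_of_isTwistedDerivation {R G : Type*} [CommRing R] [CommMonoid G]
    {m : ℕ} (hm : IsUnit (m : R)) (hG : ∀ g : G, g ^ m = 1)
    {σ : MonoidAlgebra R G →* MonoidAlgebra R G} {D : MonoidAlgebra R G →ₗ[R] MonoidAlgebra R G}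
    (hD : IsTwistedDerivation σ D) : D = 0 := by
  have hmA : IsUnit (m : MonoidAlgebra R G) := by
    simpa only [map_natCast] using hm.map (algebraMap R (MonoidAlgebra R G))
  refine MonoidAlgebra.lhom_ext' fun g => LinearMap.ext fun r => ?_
  have hDg : D (of R G g) = 0 :=
    hD.apply_eq_zero_of_pow_eq_one hmA (by rw [← map_pow, hG, map_one])
  change D (single g r) = 0
  rw [← mul_one r, ← smul_eq_mul, ← smul_single, map_smul]
  exact (congrArg (r • ·) hDg).trans (smul_zero r)

theorem stmt16_general {R : Type*} [CommRing R] (n : ℕ)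
    (hn : IsUnit (n : R))
    (σ : MonoidAlgebra R (Multiplicative (ZMod n)) →ₐ[R] MonoidAlgebra R (Multiplicative (ZMod n))) :
    ∀ D : MonoidAlgebra R (Multiplicative (ZMod n)) →ₗ[R] MonoidAlgebra R (Multiplicative (ZMod n)),
      (∀ a b, D (a * b) = D a * σ b + σ a * D b) → D = 0 := by
  intro D hD
  have hG (g : Multiplicative (ZMod n)) : g ^ n = 1 := by
    rw [← toAdd_eq_zero, toAdd_pow, nsmul_eq_mul, ZMod.natCast_self, zero_mul]
  exact MonoidAlgebra.eq_zero_of_isTwistedDerivation hn hG hD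

/-- If `n` is invertible in `R` and `σ` is the `R`-algebra endomorphism of
the group ring of `⟨x | x^n = 1⟩` with `σ x = x^u` (`u < n`), then the only
`(σ,σ)`-derivation of `RG` is the zero map. -/
theorem stmt16 {R : Type*} [CommRing R] (n u : ℕ) [NeZero n]
    (hn : IsUnit (n : R)) (hu : u < n)
    (σ : MonoidAlgebra R (Multiplicative (ZMod n)) →ₐ[R] MonoidAlgebra R (Multiplicative (ZMod n)))
    (hσ : σ (xgen R n) = xgen R n ^ u) :
    ∀ D : MonoidAlgebra R (Multiplicative (ZMod n)) →ₗ[R] MonoidAlgebra R (Multiplicative (ZMod n)),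
      (∀ a b, D (a * b) = D a * σ b + σ a * D b) → D = 0 :=
  stmt16_general n hn σ
end
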